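/- Take Υ = 0.64, ϑ = 10^{−10} and κ = 1 − 5ϑ in the definition of 𝒱. Then for every real u ≥ 20 and every real v, 1 ≤ 𝒱(u,v) ≤ 1 + e^{−0.35u}. -/

import Mathlib

open Complex Real

/-- The function `𝒱(u,v)` with parameters `Υ` and `κ`; for `u = 0` the last term is
interpreted by its limiting value `2/(Υκ)`. -/
noncomputable def scrV (Υ κ : ℝ) (u v : ℝ) : ℝ :=
  1 + Real.exp (-2 * u) *
      (‖
          ((Complex.exp (((-u : ℂ) + (v : ℂ) * I) * (κ : ℂ)) -
              Complex.exp ((1 - (Υ : ℂ)) * ((-u : ℂ) + (v : ℂ) * I) * (κ : ℂ))) /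
            ((Υ : ℂ) * ((-u : ℂ) + (v : ℂ) * I) * (κ : ℂ)))‖) ^ 2 +
    (if u = 0 then 2 / (Υ * κ)
     else (1 - Real.exp (-2 * u)) * (Real.exp (-u * (1 - Υ) * κ) - Real.exp (-u * κ)) /
        (u * Υ * κ) ^ 2)

/-! The bound holds because both terms added to `1` are nonnegative and, for `u` large,
decay exponentially: the first is at most `4 e^{-2u} / (Υκu)²`, as the two exponentials in its
numerator have modulus at most `1` and its denominator has modulus at least `Υκu`; the second is
at most `e^{-(1-Υ)κu} / (Υκu)²`. For `Υ = 0.64` and `u ≥ 20` one has `(1-Υ)κ ≥ 0.35` and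
`Υκu ≥ 12`, so their sum is at most `5 e^{-0.35u} / 144`. -/

theorem Complex.norm_exp_sub_exp_le_two {a b : ℂ} (ha : a.re ≤ 0) (hb : b.re ≤ 0) :
    ‖Complex.exp a - Complex.exp b‖ ≤ 2 := by
  calc ‖Complex.exp a - Complex.exp b‖ ≤ ‖Complex.exp a‖ + ‖Complex.exp b‖ := norm_sub_le _ _
    _ ≤ 1 + 1 := by
      rw [Complex.norm_exp, Complex.norm_exp]
      exact add_le_add (Real.exp_le_one_iff.2 ha) (Real.exp_le_one_iff.2 hb)
    _ = 2 := by norm_num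

namespace scrV

variable (Υ κ u v : ℝ)

noncomputable def quot : ℂ :=
  (Complex.exp (((-u : ℂ) + (v : ℂ) * I) * (κ : ℂ)) -
      Complex.exp ((1 - (Υ : ℂ)) * ((-u : ℂ) + (v : ℂ) * I) * (κ : ℂ))) /
    ((Υ : ℂ) * ((-u : ℂ) + (v : ℂ) * I) * (κ : ℂ))

noncomputable def tail : ℝ :=
  (1 - Real.exp (-2 * u)) * (Real.exp (-u * (1 - Υ) * κ) - Real.exp (-u * κ)) / (u * Υ * κ) ^ 2

variable {Υ κ u}

theorem eq_of_ne_zero (hu : u ≠ 0) :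
    scrV Υ κ u v = 1 + Real.exp (-2 * u) * ‖quot Υ κ u v‖ ^ 2 + tail Υ κ u := by
  rw [scrV, if_neg hu, quot, tail]

theorem tail_nonneg (hΥκ : 0 ≤ Υ * κ) : 0 ≤ tail Υ κ u := by
  refine div_nonneg ?_ (sq_nonneg _)
  have hexp : ∀ {a b : ℝ}, a ≤ b → 0 ≤ Real.exp b - Real.exp a := fun h =>
    sub_nonneg.2 (Real.exp_le_exp.2 h)
  rcases le_total 0 u with hu | hu
  · exact mul_nonneg (by simpa using hexp (by linarith : -2 * u ≤ 0))
      (hexp (by nlinarith [mul_nonneg hu hΥκ]))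
  · refine mul_nonneg_of_nonpos_of_nonpos ?_ ?_
    · linarith [hexp (by linarith : 0 ≤ -2 * u), Real.exp_zero]
    · linarith [hexp (by nlinarith [mul_nonneg (neg_nonneg.2 hu) hΥκ] :
        -u * (1 - Υ) * κ ≤ -u * κ)]

theorem tail_le (hu : 0 ≤ u) :
    tail Υ κ u ≤ Real.exp (-(1 - Υ) * κ * u) / (Υ * κ * u) ^ 2 := by
  have hnum : (1 - Real.exp (-2 * u)) * (Real.exp (-u * (1 - Υ) * κ) - Real.exp (-u * κ))
      ≤ Real.exp (-u * (1 - Υ) * κ) := by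
    have h2u : 0 ≤ 1 - Real.exp (-2 * u) :=
      sub_nonneg.2 (Real.exp_le_one_iff.2 (by linarith))
    have h2u' : 1 - Real.exp (-2 * u) ≤ 1 := by linarith [Real.exp_pos (-2 * u)]
    rcases le_total (Real.exp (-u * κ)) (Real.exp (-u * (1 - Υ) * κ)) with h | h
    · nlinarith [Real.exp_pos (-u * κ)]
    · nlinarith [Real.exp_pos (-u * (1 - Υ) * κ)]
  rw [tail, show u * Υ * κ = Υ * κ * u by ring,
    show -(1 - Υ) * κ * u = -u * (1 - Υ) * κ by ring]
  exact div_le_div_of_nonneg_right hnum (sq_nonneg _)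

theorem norm_quot_le (hΥ₀ : 0 < Υ) (hΥ₁ : Υ ≤ 1) (hκ : 0 < κ) (hu : 0 < u) :
    ‖quot Υ κ u v‖ ≤ 2 / (Υ * κ * u) := by
  set z : ℂ := (-u : ℂ) + (v : ℂ) * I
  have hz : z.re = -u := by simp [z]
  have hnum : ‖Complex.exp (z * κ) - Complex.exp ((1 - Υ) * z * κ)‖ ≤ 2 := by
    refine Complex.norm_exp_sub_exp_le_two ?_ ?_
    · simp only [Complex.re_mul_ofReal, hz]
      nlinarith
    · rw [Complex.re_mul_ofReal, show (1 - (Υ : ℂ)) = ((1 - Υ : ℝ) : ℂ) by push_cast; ring,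
        Complex.re_ofReal_mul, hz]
      nlinarith [mul_pos hu hκ]
  have hden : Υ * κ * u ≤ ‖(Υ : ℂ) * z * κ‖ := by
    have hre : u ≤ ‖z‖ := by simpa [hz, abs_of_pos hu] using Complex.abs_re_le_norm z
    rw [norm_mul, norm_mul, Complex.norm_real, Complex.norm_real, Real.norm_eq_abs,
      Real.norm_eq_abs, abs_of_pos hΥ₀, abs_of_pos hκ]
    nlinarith [mul_pos hΥ₀ hκ]
  rw [quot, norm_div]
  exact div_le_div₀ zero_le_two hnum (by positivity) hden

end scrV

section

variable {Υ κ u : ℝ} (v : ℝ)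

theorem one_le_scrV (hΥκ : 0 ≤ Υ * κ) : 1 ≤ scrV Υ κ u v := by
  rcases eq_or_ne u 0 with rfl | hu
  · rw [scrV, if_pos rfl]
    exact le_add_of_le_of_nonneg (le_add_of_nonneg_right (by positivity))
      (div_nonneg zero_le_two hΥκ)
  · rw [scrV.eq_of_ne_zero v hu]
    exact le_add_of_le_of_nonneg (le_add_of_nonneg_right (by positivity))
      (scrV.tail_nonneg hΥκ)

theorem scrV_le (hΥ₀ : 0 < Υ) (hΥ₁ : Υ ≤ 1) (hκ : 0 < κ) (hu : 0 < u) :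
    scrV Υ κ u v ≤
      1 + (4 * Real.exp (-2 * u) + Real.exp (-(1 - Υ) * κ * u)) / (Υ * κ * u) ^ 2 := by
  have hquot : ‖scrV.quot Υ κ u v‖ ^ 2 ≤ 4 / (Υ * κ * u) ^ 2 := by
    calc ‖scrV.quot Υ κ u v‖ ^ 2 ≤ (2 / (Υ * κ * u)) ^ 2 :=
          pow_le_pow_left₀ (norm_nonneg _) (scrV.norm_quot_le v hΥ₀ hΥ₁ hκ hu) 2
      _ = 4 / (Υ * κ * u) ^ 2 := by ring
  have hsplit : (4 * Real.exp (-2 * u) + Real.exp (-(1 - Υ) * κ * u)) / (Υ * κ * u) ^ 2 =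
      Real.exp (-2 * u) * (4 / (Υ * κ * u) ^ 2) +
        Real.exp (-(1 - Υ) * κ * u) / (Υ * κ * u) ^ 2 := by
    ring
  rw [scrV.eq_of_ne_zero v hu.ne', hsplit]
  linarith [mul_le_mul_of_nonneg_left hquot (Real.exp_pos (-2 * u)).le,
    scrV.tail_le (Υ := Υ) (κ := κ) hu.le]

theorem scrV_le_one_add_exp {c : ℝ} (hΥ₀ : 0 < Υ) (hΥ₁ : Υ ≤ 1) (hκ : 0 < κ) (hu : 0 < u)
    (hc₂ : c ≤ 2) (hcΥκ : c ≤ (1 - Υ) * κ) (hden : 5 ≤ (Υ * κ * u) ^ 2) :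
    scrV Υ κ u v ≤ 1 + Real.exp (-c * u) := by
  have h₁ : Real.exp (-2 * u) ≤ Real.exp (-c * u) := Real.exp_le_exp.2 (by nlinarith)
  have h₂ : Real.exp (-(1 - Υ) * κ * u) ≤ Real.exp (-c * u) := Real.exp_le_exp.2 (by nlinarith)
  have hnum : 4 * Real.exp (-2 * u) + Real.exp (-(1 - Υ) * κ * u) ≤ 5 * Real.exp (-c * u) := by
    linarith
  calc scrV Υ κ u v
      ≤ 1 + (4 * Real.exp (-2 * u) + Real.exp (-(1 - Υ) * κ * u)) / (Υ * κ * u) ^ 2 :=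
        scrV_le v hΥ₀ hΥ₁ hκ hu
    _ ≤ 1 + 5 * Real.exp (-c * u) / 5 := by gcongr
    _ = 1 + Real.exp (-c * u) := by ring

end

theorem scrV_trivial_bound (u v : ℝ) (hu : 20 ≤ u) :
    1 ≤ scrV 0.64 (1 - 5 * 1e-10) u v ∧
      scrV 0.64 (1 - 5 * 1e-10) u v ≤ 1 + Real.exp (-0.35 * u) := by
  refine ⟨one_le_scrV v (by norm_num), ?_⟩
  have hΥκu : 12 ≤ 0.64 * (1 - 5 * 1e-10) * u := by nlinarith
  exact scrV_le_one_add_exp v (by norm_num) (by norm_num) (by norm_num) (by linarith)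
    (by norm_num) (by norm_num) (by nlinarith)
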